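/- Let $X_1,X_2\sim\mathcal{N}(0,1)$ be independent and let $a,b>0$ with $a^2+b^2=1$. Then for all $\gamma_1,\gamma_2\in\mathbb{R}$: (1) $\big|\Pr[X_1\ge\gamma_1\mid aX_1+bX_2=\gamma_2]-\Pr[X_1\ge\gamma_1\mid aX_1+bX_2=0]\big|\le C\,a|\gamma_2|/b$ for a universal constant $C$; (2) $\Pr[|X_1|\le\gamma_1\mid aX_1+bX_2=\gamma_2]\le C\,|\gamma_1|/b$. -/
import Mathlib


open MeasureTheory ProbabilityTheory

open scoped Real NNReal

lemma gauss_set_bound (μ : ℝ) {v : ℝ≥0} (hv : v ≠ 0) (s : Set ℝ) {L : ℝ} (hL : 0 ≤ L)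
    (hvol : volume s ≤ ENNReal.ofReal L) :
    (gaussianReal μ v s).toReal ≤ L / Real.sqrt (2 * π * v) := by
  have hpdf : ∀ x, gaussianPDF μ v x ≤ ENNReal.ofReal ((Real.sqrt (2 * π * v))⁻¹) := by
    intro x
    rw [gaussianPDF]
    refine ENNReal.ofReal_le_ofReal ?_
    rw [gaussianPDFReal]
    have h1 : Real.exp (-(x - μ) ^ 2 / (2 * v)) ≤ 1 := by
      apply Real.exp_le_one_iff.mpr
      apply div_nonpos_of_nonpos_of_nonneg
      · simp [sq_nonneg]
      · positivity
    nlinarith [inv_nonneg.mpr (Real.sqrt_nonneg (2 * π * v))]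
  have key : gaussianReal μ v s ≤ ENNReal.ofReal (L / Real.sqrt (2 * π * v)) := by
    calc gaussianReal μ v s = ∫⁻ x in s, gaussianPDF μ v x := gaussianReal_apply μ hv s
    _ ≤ ∫⁻ _ in s, ENNReal.ofReal ((Real.sqrt (2 * π * v))⁻¹) :=
        MeasureTheory.lintegral_mono fun x => hpdf x
    _ = ENNReal.ofReal ((Real.sqrt (2 * π * v))⁻¹) * volume s := by
        rw [MeasureTheory.setLIntegral_const]
    _ ≤ ENNReal.ofReal ((Real.sqrt (2 * π * v))⁻¹) * ENNReal.ofReal L :=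
        mul_le_mul_right hvol _
    _ = ENNReal.ofReal (L / Real.sqrt (2 * π * v)) := by
        rw [← ENNReal.ofReal_mul (by positivity)]
        rw [div_eq_mul_inv, mul_comm]
  calc (gaussianReal μ v s).toReal ≤ (ENNReal.ofReal (L / Real.sqrt (2 * π * v))).toReal :=
        ENNReal.toReal_mono ENNReal.ofReal_ne_top key
  _ ≤ L / Real.sqrt (2 * π * v) := by rw [ENNReal.toReal_ofReal (by positivity)]

lemma gauss_Ici_sub (v : ℝ≥0) {s t : ℝ} (hst : s ≤ t) :
    (gaussianReal 0 v (Set.Ici s)).toReal - (gaussianReal 0 v (Set.Ici t)).toReal =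
      (gaussianReal 0 v (Set.Ico s t)).toReal := by
  have h1 : Set.Ici s \ Set.Ici t = Set.Ico s t := Set.Ici_diff_Ici
  have h2 : gaussianReal 0 v (Set.Ici s \ Set.Ici t) =
      gaussianReal 0 v (Set.Ici s) - gaussianReal 0 v (Set.Ici t) :=
    measure_diff (Set.Ici_subset_Ici.mpr hst) measurableSet_Ici.nullMeasurableSet
      (measure_ne_top _ _)
  rw [← h1, h2, ENNReal.toReal_sub_of_le (measure_mono (Set.Ici_subset_Ici.mpr hst))
    (measure_ne_top _ _)]

/-- Conditional Gaussian estimates: conditioned on `a X₁ + b X₂ = γ₂` (with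
`X₁, X₂` independent standard Gaussians and `a² + b² = 1`), `X₁ ∼ N(a γ₂, b²)`.
(1) The conditional probability of `X₁ ≥ γ₁` changes by at most `C a |γ₂| / b`
compared to conditioning on `a X₁ + b X₂ = 0`;
(2) the conditional probability of `|X₁| ≤ γ₁` is at most `C |γ₁| / b`. -/
theorem conditional_gaussian_estimates :
    ∃ C > (0 : ℝ), ∀ a b γ₁ γ₂ : ℝ, 0 < a → 0 < b → a ^ 2 + b ^ 2 = 1 →
      |((gaussianReal (a * γ₂) (Real.toNNReal (b ^ 2))) {x | γ₁ ≤ x}).toReal -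
          ((gaussianReal 0 (Real.toNNReal (b ^ 2))) {x | γ₁ ≤ x}).toReal| ≤
        C * (a * |γ₂| / b) ∧
      ((gaussianReal (a * γ₂) (Real.toNNReal (b ^ 2))) {x | |x| ≤ γ₁}).toReal ≤
        C * (|γ₁| / b) := by
  refine ⟨2, by norm_num, fun a b γ₁ γ₂ ha hb _ => ?_⟩
  set v : ℝ≥0 := Real.toNNReal (b ^ 2) with hvdef
  have hvc : (v : ℝ) = b ^ 2 := Real.coe_toNNReal _ (by positivity)
  have hv : v ≠ 0 := by
    intro h
    rw [h] at hvc
    simp only [NNReal.coe_zero] at hvc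
    nlinarith
  set μ : ℝ := a * γ₂ with hμdef
  have hsqrt : b ≤ Real.sqrt (2 * π * v) := by
    rw [hvc]
    nth_rewrite 1 [← Real.sqrt_sq hb.le]
    apply Real.sqrt_le_sqrt
    nlinarith [Real.pi_gt_three]
  have hdivle : ∀ L : ℝ, 0 ≤ L → L / Real.sqrt (2 * π * v) ≤ L / b := by
    intro L hL
    rcases eq_or_lt_of_le hL with h | h
    · simp [← h]
    · exact div_le_div_of_nonneg_left hL hb hsqrt
  have hset : {x : ℝ | γ₁ ≤ x} = Set.Ici γ₁ := rfl
  have htrans : gaussianReal μ v {x | γ₁ ≤ x} = gaussianReal 0 v (Set.Ici (γ₁ - μ)) := by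
    have hmap : (gaussianReal 0 v).map (· + μ) = gaussianReal μ v := by
      rw [gaussianReal_map_add_const μ, zero_add]
    rw [hset, ← hmap, Measure.map_apply (measurable_add_const μ) measurableSet_Ici]
    congr 1
    ext x
    simp only [Set.mem_preimage, Set.mem_Ici]
    constructor <;> intro h <;> linarith
  have habsμ : |μ| = a * |γ₂| := by
    rw [hμdef, abs_mul, abs_of_pos ha]
  constructor
  · -- part 1
    rw [htrans, hset]
    rcases le_or_gt 0 μ with hμ | hμ
    · have hle : γ₁ - μ ≤ γ₁ := by linarith
      rw [gauss_Ici_sub v hle]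
      rw [abs_of_nonneg ENNReal.toReal_nonneg]
      have hvol : volume (Set.Ico (γ₁ - μ) γ₁) ≤ ENNReal.ofReal μ := by
        rw [Real.volume_Ico]
        apply ENNReal.ofReal_le_ofReal; linarith
      calc (gaussianReal 0 v (Set.Ico (γ₁ - μ) γ₁)).toReal
          ≤ μ / Real.sqrt (2 * π * v) := gauss_set_bound 0 hv _ hμ hvol
        _ ≤ μ / b := hdivle μ hμ
        _ ≤ 2 * (a * |γ₂| / b) := by
            rw [← habsμ, abs_of_nonneg hμ]
            have : μ / b ≤ 2 * (μ / b) := by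
              have : 0 ≤ μ / b := div_nonneg hμ hb.le
              linarith
            exact this
    · have hle : γ₁ ≤ γ₁ - μ := by linarith
      rw [abs_sub_comm, gauss_Ici_sub v hle]
      rw [abs_of_nonneg ENNReal.toReal_nonneg]
      have hμ' : 0 ≤ -μ := by linarith
      have hvol : volume (Set.Ico γ₁ (γ₁ - μ)) ≤ ENNReal.ofReal (-μ) := by
        rw [Real.volume_Ico]
        apply ENNReal.ofReal_le_ofReal; linarith
      calc (gaussianReal 0 v (Set.Ico γ₁ (γ₁ - μ))).toReal
          ≤ -μ / Real.sqrt (2 * π * v) := gauss_set_bound 0 hv _ hμ' hvol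
        _ ≤ -μ / b := hdivle _ hμ'
        _ ≤ 2 * (a * |γ₂| / b) := by
            rw [← habsμ, abs_of_neg hμ]
            have : 0 ≤ -μ / b := div_nonneg hμ' hb.le
            linarith
  · -- part 2
    have hset2 : {x : ℝ | |x| ≤ γ₁} = Set.Icc (-γ₁) γ₁ := by
      ext x; simp [abs_le]
    rw [hset2]
    have hvol : volume (Set.Icc (-γ₁) γ₁) ≤ ENNReal.ofReal (2 * |γ₁|) := by
      rw [Real.volume_Icc]
      apply ENNReal.ofReal_le_ofReal
      cases abs_cases γ₁ with
      | inl h => linarith [h.1]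
      | inr h => linarith [h.1]
    have hL : (0:ℝ) ≤ 2 * |γ₁| := by positivity
    calc (gaussianReal μ v (Set.Icc (-γ₁) γ₁)).toReal
        ≤ 2 * |γ₁| / Real.sqrt (2 * π * v) := gauss_set_bound μ hv _ hL hvol
      _ ≤ 2 * |γ₁| / b := hdivle _ hL
      _ = 2 * (|γ₁| / b) := by ring
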